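/- Let T be an increasing shifted tableau whose largest first-row entry satisfies T_{(1,λ₁)} < a, and let a < b < c with row(T)·acb an FPF-involution word. Then T ← acb = T ← cab: both insertions append a and b to the end of the first row and insert c into the second row. -/

import Mathlib

/-!
Write `r` for the first row of `T`. Every entry of `r` is smaller than `a < b < c`, so in both
words the first two letters are appended to the first row, and then the third letter bumps `c`
out of it: `b` bumps `c` from `r a c`, and `a` bumps `c` from `r c`. What remains is to insert
`c` into the rows below a first row `r a b`, respectively `r a`, and these two insertions agree.
Indeed the rows below `r` are shorter than `r`, so the insertion never reaches beyond column `|r|`;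
up to that column the two first rows both read `r a`, whose entries are smaller than every letter
the insertion carries, so it reads them only to skip them. Existence of the insertion follows by
well-founded induction: a row insertion moves down a row and a column insertion moves right.
-/

/-- The function underlying the permutation `Θ = (12)(34)(56)⋯` on positive integers
(fixing `0`). -/
def thetaFun (n : ℕ) : ℕ :=
  if n = 0 then 0 else if n % 2 = 1 then n + 1 else n - 1

lemma thetaFun_involutive : Function.Involutive thetaFun := by
  intro n
  by_cases h0 : n = 0
  · simp [thetaFun, h0]
  · by_cases h1 : n % 2 = 1
    · have e1 : thetaFun n = n + 1 := by simp [thetaFun, h0, h1]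
      have h2 : ¬ ((n + 1) % 2 = 1) := by omega
      have h3 : ¬ (n + 1 = 0) := by omega
      rw [e1]
      simp only [thetaFun, if_neg h3, if_neg h2]
      omega
    · have e1 : thetaFun n = n - 1 := by simp [thetaFun, h0, h1]
      have h2 : (n - 1) % 2 = 1 := by omega
      have h3 : ¬ (n - 1 = 0) := by omega
      rw [e1]
      simp only [thetaFun, if_neg h3, if_pos h2]
      omega

/-- The fixed-point-free involution `Θ = (12)(34)(56)⋯`. -/
def theta : Equiv.Perm ℕ := Function.Involutive.toPerm thetaFun thetaFun_involutive

/-- The simple transposition `s_i = (i, i+1)`. -/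
def sPerm (i : ℕ) : Equiv.Perm ℕ := Equiv.swap i (i + 1)

/-- For a word `w = i₁i₂⋯i_l`, the permutation `s_{i_l}⋯s_{i₁} Θ s_{i₁}⋯s_{i_l}`. -/
def heckeConj (w : List ℕ) : Equiv.Perm ℕ :=
  ((w.map sPerm).reverse).prod * theta * (w.map sPerm).prod

/-- `w` is a symplectic Hecke word for `z`, i.e. a word of positive letters with
`z = s_{i_l}⋯s_{i₁} Θ s_{i₁}⋯s_{i_l}`. -/
def SympHecke (z : Equiv.Perm ℕ) (w : List ℕ) : Prop :=
  (∀ i ∈ w, 1 ≤ i) ∧ z = heckeConj w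

/-- `z` belongs to `F_∞`, the conjugacy set `{π⁻¹ Θ π : π ∈ S_∞}`. -/
def InFinf (z : Equiv.Perm ℕ) : Prop := ∃ w : List ℕ, SympHecke z w

/-- `w` is an FPF-involution word for `z`: a symplectic Hecke word for `z` of minimal
length among all symplectic Hecke words for `z`. -/
def IsFPFWordFor (z : Equiv.Perm ℕ) (w : List ℕ) : Prop :=
  SympHecke z w ∧ ∀ w' : List ℕ, SympHecke z w' → w.length ≤ w'.length

/-- `w` is an FPF-involution word (for the element it determines). -/
def IsFPFWord (w : List ℕ) : Prop := IsFPFWordFor (heckeConj w) w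
/-- A shifted tableau, given as its list of rows (top to bottom); row `i` (0-indexed)
implicitly occupies absolute columns `i, i+1, …`. -/
abbrev Tab := List (List ℕ)

/-- Replace row `i` of `T` by `r`, creating a new row if `i = T.length`. -/
def updRow (T : Tab) (i : ℕ) (r : List ℕ) : Tab :=
  if i < T.length then T.set i r else T ++ [r]

/-- The entries of absolute column `c` of `T`, from top to bottom. -/
def colList (T : Tab) (c : ℕ) : List ℕ :=
  (List.range (c + 1)).filterMap (fun i => (T[i]?).bind (fun r => r[c - i]?))

mutual
/-- `InsRow T i a T' pos pr`: the row-insertion phase of FPF-involution Coxeter-Knuth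
insertion, inserting the letter `a` into row `i` of `T`, eventually producing the
tableau `T'` with new box at position `pos` (row, absolute column), `pr = true` iff the
insertion terminated with a column insertion. -/
inductive InsRow : Tab → ℕ → ℕ → Tab → ℕ × ℕ → Bool → Prop
  | append (T : Tab) (i a : ℕ) (r : List ℕ) :
      r = T.getD i [] →
      r.dropWhile (fun x => decide (x < a)) = [] →
      InsRow T i a (updRow T i (r ++ [a])) (i, i + r.length) false
  | equal (T : Tab) (i a : ℕ) (rest : List ℕ) (T' : Tab) (pos : ℕ × ℕ) (pr : Bool) :
      (T.getD i []).dropWhile (fun x => decide (x < a)) = a :: rest →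
      InsRow T (i+1) (a+1) T' pos pr →
      InsRow T i a T' pos pr
  | parity (T : Tab) (i a b : ℕ) (rest : List ℕ) (T' : Tab) (pos : ℕ × ℕ) (pr : Bool) :
      (T.getD i []).takeWhile (fun x => decide (x < a)) = [] →
      (T.getD i []).dropWhile (fun x => decide (x < a)) = b :: rest →
      a < b → a % 2 ≠ b % 2 →
      InsCol T (i+1) (a+2) T' pos pr →
      InsRow T i a T' pos pr
  | bumpRow (T : Tab) (i a b : ℕ) (pre rest : List ℕ) (T' : Tab) (pos : ℕ × ℕ) (pr : Bool) :
      pre = (T.getD i []).takeWhile (fun x => decide (x < a)) →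
      (T.getD i []).dropWhile (fun x => decide (x < a)) = b :: rest →
      a < b → pre ≠ [] →
      InsRow (T.set i (pre ++ a :: rest)) (i+1) b T' pos pr →
      InsRow T i a T' pos pr
  | bumpDiag (T : Tab) (i a b : ℕ) (rest : List ℕ) (T' : Tab) (pos : ℕ × ℕ) (pr : Bool) :
      (T.getD i []).takeWhile (fun x => decide (x < a)) = [] →
      (T.getD i []).dropWhile (fun x => decide (x < a)) = b :: rest →
      a < b → a % 2 = b % 2 →
      InsCol (T.set i (a :: rest)) (i+1) b T' pos pr →
      InsRow T i a T' pos pr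

/-- `InsCol T c x T' pos pr`: the column-insertion phase, inserting `x` into the
absolute column `c` of `T`. -/
inductive InsCol : Tab → ℕ → ℕ → Tab → ℕ × ℕ → Bool → Prop
  | append (T : Tab) (c x k : ℕ) :
      (colList T c).dropWhile (fun y => decide (y < x)) = [] →
      k = (colList T c).length →
      (T.getD k []).length = c - k →
      k ≤ c →
      InsCol T c x (updRow T k ((T.getD k []) ++ [x])) (k, c) true
  | equal (T : Tab) (c x : ℕ) (rest : List ℕ) (T' : Tab) (pos : ℕ × ℕ) (pr : Bool) :
      (colList T c).dropWhile (fun y => decide (y < x)) = x :: rest →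
      InsCol T (c+1) (x+1) T' pos pr →
      InsCol T c x T' pos pr
  | bump (T : Tab) (c x b k : ℕ) (rest : List ℕ) (T' : Tab) (pos : ℕ × ℕ) (pr : Bool) :
      (colList T c).dropWhile (fun y => decide (y < x)) = b :: rest →
      x < b →
      k = ((colList T c).takeWhile (fun y => decide (y < x))).length →
      InsCol (T.set k ((T.getD k []).set (c - k) x)) (c+1) b T' pos pr →
      InsCol T c x T' pos pr
end

/-- Insertion of a word, letter by letter, each letter starting at the first row.
`InsWord T w T'` means `T ← w = T'`. -/
inductive InsWord : Tab → List ℕ → Tab → Prop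
  | nil (T : Tab) : InsWord T [] T
  | cons (T T₁ T₂ : Tab) (a : ℕ) (w : List ℕ) (pos : ℕ × ℕ) (pr : Bool) :
      InsRow T 0 a T₁ pos pr → InsWord T₁ w T₂ → InsWord T (a :: w) T₂

/-- A recording tableau: each box carries a label together with a primed flag. -/
abbrev RTab := List (List (ℕ × Bool))

/-- Replace row `i` of a recording tableau, creating a new row if needed. -/
def updRowR (Q : RTab) (i : ℕ) (r : List (ℕ × Bool)) : RTab :=
  if i < Q.length then Q.set i r else Q ++ [r]

/-- `InsWordRec T Q k w T' Q'`: insertion of the word `w` starting from the pair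
`(T, Q)` with next label `k`, recording label `k` (primed iff the insertion of the
letter terminated with a column insertion) in the new box. -/
inductive InsWordRec : Tab → RTab → ℕ → List ℕ → Tab → RTab → Prop
  | nil (T : Tab) (Q : RTab) (k : ℕ) : InsWordRec T Q k [] T Q
  | cons (T T₁ T₂ : Tab) (Q Q₂ : RTab) (k a i j : ℕ) (w : List ℕ) (pr : Bool) :
      InsRow T 0 a T₁ (i, j) pr →
      InsWordRec T₁ (updRowR Q i ((Q.getD i []) ++ [(k, pr)])) (k+1) w T₂ Q₂ →
      InsWordRec T Q k (a :: w) T₂ Q₂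

/-- `T` is an increasing shifted tableau (with positive entries). -/
def IsIncreasingTab (T : Tab) : Prop :=
  (∀ r ∈ T, r ≠ []) ∧
  List.Chain' (fun r s : List ℕ => s.length < r.length) T ∧
  (∀ r ∈ T, List.Chain' (· < ·) r) ∧
  (∀ r ∈ T, ∀ x ∈ r, 1 ≤ x) ∧
  (∀ i k x y, (T.getD (i+1) [])[k]? = some x →
      (T.getD i [])[k+1]? = some y → y < x)

/-- The row reading word of `T`: rows from bottom to top, each left to right. -/
def rowWord (T : Tab) : List ℕ := T.reverse.flatten

namespace List

theorem IsChain.getElem_add_sub_le {l : List ℕ} (hl : l.IsChain (· > ·)) {i j : ℕ}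
    (hij : i ≤ j) (hj : j < l.length) : l[j] + (j - i) ≤ l[i] := by
  induction j, hij using Nat.le_induction with
  | base => simp
  | succ j hij ih =>
    have hstep := List.isChain_iff_getElem.mp hl j hj
    have := ih (by omega)
    omega

theorem getElem?_filterMap_of_pairwise {α β : Type*} {f : α → Option β} {l : List α}
    (hl : l.Pairwise fun x y => (f y).isSome → (f x).isSome) (p : ℕ) :
    (l.filterMap f)[p]? = l[p]?.bind f := by
  induction l generalizing p with
  | nil => simp
  | cons x xs ih =>
    obtain ⟨hx, hxs⟩ := pairwise_cons.mp hl
    cases hfx : f x with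
    | none =>
      have hnone : ∀ y ∈ xs, f y = none := fun y hy => by
        simpa [hfx] using mt (hx y hy)
      cases p with
      | zero => simp [hfx, filterMap_eq_nil_iff.mpr hnone]
      | succ p =>
        cases hp : xs[p]? with
        | none => simp [hfx, filterMap_eq_nil_iff.mpr hnone, hp]
        | some y => simp [hfx, filterMap_eq_nil_iff.mpr hnone, hp, hnone y (mem_of_getElem? hp)]
    | some y => cases p <;> simp [hfx, ih hxs]

theorem getElem?_length_takeWhile_of_dropWhile_eq_cons {α : Type*} {p : α → Bool} {l : List α}
    {e : α} {rest : List α} (h : l.dropWhile p = e :: rest) :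
    l[(l.takeWhile p).length]? = some e := by
  have hsplit : l.takeWhile p ++ e :: rest = l := by rw [← h, takeWhile_append_dropWhile]
  calc l[(l.takeWhile p).length]? = (l.takeWhile p ++ e :: rest)[(l.takeWhile p).length]? := by
        rw [hsplit]
    _ = some e := by simp

theorem eq_false_of_dropWhile_eq_cons {α : Type*} {p : α → Bool} {l : List α} {e : α}
    {rest : List α} (h : l.dropWhile p = e :: rest) : p e = false := by
  simpa [h] using head_dropWhile_not p (l := l) (by simp [h])

theorem getD_set_of_ne {α : Type*} {l : List α} {i j : ℕ} (h : i ≠ j) (a d : α) :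
    (l.set i a).getD j d = l.getD j d := by
  simp [getD_eq_getElem?_getD, getElem?_set_ne h]

theorem getD_set_self_of_lt {α : Type*} {l : List α} {i : ℕ} (h : i < l.length) (a d : α) :
    (l.set i a).getD i d = a := by
  simp [getD_eq_getElem?_getD, getElem?_set_self h]

theorem isChain_takeWhile_append_cons {r : List ℕ} (hr : r.IsChain (· < ·)) {v b : ℕ}
    {rest : List ℕ} (h : r.dropWhile (· < v) = b :: rest) (hvb : v < b) :
    (r.takeWhile (· < v) ++ v :: rest).IsChain (· < ·) := by
  have hsplit : r.takeWhile (· < v) ++ b :: rest = r := by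
    rw [← h, takeWhile_append_dropWhile]
  rw [← hsplit, isChain_iff_pairwise, pairwise_append, pairwise_cons] at hr
  obtain ⟨hpre, ⟨hb, hrest⟩, -⟩ := hr
  have hlt : ∀ y ∈ r.takeWhile (· < v), y < v := fun y hy => by
    simpa using mem_takeWhile_imp hy
  refine isChain_iff_pairwise.mpr (pairwise_append.mpr ⟨hpre, ?_, ?_⟩)
  · exact pairwise_cons.mpr ⟨fun y hy => hvb.trans (hb y hy), hrest⟩
  · intro y hy z hz
    rcases mem_cons.mp hz with rfl | hz
    · exact hlt y hy
    · exact (hlt y hy).trans (hvb.trans (hb z hz))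

end List

theorem updRow_cons_zero (r₀ r : List ℕ) (B : Tab) : updRow (r₀ :: B) 0 r = r :: B := by
  simp [updRow]

theorem updRow_cons_succ (r₀ r : List ℕ) (B : Tab) (i : ℕ) :
    updRow (r₀ :: B) (i + 1) r = r₀ :: updRow B i r := by
  unfold updRow
  split_ifs <;> simp_all

theorem colList_cons_succ (r : List ℕ) (B : Tab) (c : ℕ) :
    colList (r :: B) (c + 1) = r[c + 1]?.toList ++ colList B c := by
  unfold colList
  rw [List.range_succ_eq_map, List.filterMap_cons, List.filterMap_map]
  cases h : r[c + 1]? <;> simp [h]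

theorem colList_append_cons {R : List ℕ} (s : List ℕ) (B : Tab) {col : ℕ}
    (h : col + 1 < R.length) :
    colList ((R ++ s) :: B) (col + 1) = R[col + 1] :: colList B col := by
  rw [colList_cons_succ, List.getElem?_append_left h, List.getElem?_eq_getElem h]
  rfl

theorem length_colList_le (B : Tab) (c : ℕ) : (colList B c).length ≤ c + 1 := by
  unfold colList
  simpa using List.length_filterMap_le _ (List.range (c + 1))

theorem bind_getElem?_eq_getElem?_getD (B : Tab) (j k : ℕ) :
    (B[j]?).bind (·[k]?) = (B.getD j [])[k]? := by
  cases h : B[j]? <;> simp [List.getD_eq_getElem?_getD, h]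

theorem map_length_set_of_length_eq {B : Tab} {j : ℕ} {r : List ℕ}
    (h : r.length = (B.getD j []).length) : (B.set j r).map List.length = B.map List.length := by
  ext1 k
  by_cases hjk : j = k
  · subst hjk
    by_cases hj : j < B.length
    · rw [List.getElem?_map, List.getElem?_map, List.getElem?_set_self hj,
        List.getElem?_eq_getElem hj]
      simp [h, List.getD_eq_getElem?_getD, List.getElem?_eq_getElem hj]
    · simp [not_lt.mp hj]
  · simp [List.getElem?_set_ne hjk]

section Shape

variable {B : Tab}

theorem length_getD_add_sub_le (hB : (B.map List.length).IsChain (· > ·)) {i j : ℕ}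
    (hij : i ≤ j) (hj : j < B.length) :
    (B.getD j []).length + (j - i) ≤ (B.getD i []).length := by
  have := hB.getElem_add_sub_le hij (by simpa using hj)
  rw [List.getElem_map, List.getElem_map] at this
  simpa [List.getD_eq_getElem?_getD, List.getElem?_eq_getElem hj,
    List.getElem?_eq_getElem (hij.trans_lt hj)] using this

theorem length_getD_add_lt {n : ℕ} (hB : (n :: B.map List.length).IsChain (· > ·)) {j : ℕ}
    (hj : j < B.length) : (B.getD j []).length + j < n := by
  have := hB.getElem_add_sub_le (Nat.zero_le (j + 1)) (by simpa using hj)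
  simp [List.getD_eq_getElem?_getD, List.getElem?_eq_getElem hj] at this ⊢
  omega

theorem getElem?_colList (hB : (B.map List.length).IsChain (· > ·)) {c p : ℕ} (hp : p ≤ c) :
    (colList B c)[p]? = (B.getD p [])[c - p]? := by
  unfold colList
  rw [List.getElem?_filterMap_of_pairwise, List.getElem?_range (by omega), Option.bind_some,
    bind_getElem?_eq_getElem?_getD]
  refine (List.Pairwise.and_mem.mp List.pairwise_lt_range).imp ?_
  rintro i j ⟨-, hj, hij⟩ hsome
  simp only [bind_getElem?_eq_getElem?_getD] at hsome ⊢
  have hreach : c - j < (B.getD j []).length := by simpa using hsome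
  have hjB : j < B.length := by
    by_contra h
    rw [List.getD_eq_default _ _ (not_lt.mp h)] at hreach
    simp at hreach
  have := length_getD_add_sub_le hB hij.le hjB
  have := List.mem_range.mp hj
  simp only [getElem?_pos, Option.isSome_some, (by omega : c - i < (B.getD i []).length)]

end Shape

/-! Insertion into the rows below a first row `R`, with an outcome that does not depend on what
follows `R` in the first row. Indices refer to the body `B`: its row `i` and column `col` are row
`i + 1` and column `col + 1` of the tableau. -/

def InsColBelow (R : List ℕ) (B : Tab) (col x : ℕ) : Prop :=
  ∃ (B' : Tab) (pos : ℕ × ℕ), ∀ s : List ℕ,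
    InsCol ((R ++ s) :: B) (col + 1) x ((R ++ s) :: B') pos true

def InsRowBelow (R : List ℕ) (B : Tab) (i v : ℕ) : Prop :=
  ∃ (B' : Tab) (pos : ℕ × ℕ) (pr : Bool), ∀ s : List ℕ,
    InsRow ((R ++ s) :: B) (i + 1) v ((R ++ s) :: B') pos pr

def RowsIncreasingFrom (B : Tab) (col : ℕ) : Prop :=
  ∀ j p u v, col ≤ j + p → (B.getD j [])[p]? = some u → (B.getD j [])[p + 1]? = some v →
    u < v

/-- Guarantees that a column insertion of `x` which ends in column `col` creates a box of a
shifted shape. -/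
def HasStopRow (B : Tab) (col x : ℕ) : Prop :=
  ∃ q < col, col ≤ q + (B.getD q []).length ∧
    ∀ u, (B.getD q [])[col - q]? = some u → x ≤ u

theorem RowsIncreasingFrom.mono {B : Tab} {col col' : ℕ} (h : RowsIncreasingFrom B col)
    (hcol : col ≤ col') : RowsIncreasingFrom B col' :=
  fun j p u v hp => h j p u v (hcol.trans hp)

theorem isChain_getD_of_forall {B : Tab} (h : ∀ r ∈ B, r.IsChain (· < ·)) (j : ℕ) :
    (B.getD j []).IsChain (· < ·) := by
  rw [List.getD_eq_getElem?_getD]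
  cases hj : B[j]? with
  | none => exact List.IsChain.nil
  | some r => exact h r (List.mem_of_getElem? hj)

theorem forall_isChain_set {B : Tab} (h : ∀ r ∈ B, r.IsChain (· < ·)) {r : List ℕ}
    (hr : r.IsChain (· < ·)) (i : ℕ) : ∀ r' ∈ B.set i r, r'.IsChain (· < ·) :=
  fun r' hr' => (List.mem_or_eq_of_mem_set hr').elim (h r') (· ▸ hr)

theorem rowsIncreasingFrom_of_forall_isChain {B : Tab} (h : ∀ r ∈ B, r.IsChain (· < ·))
    (col : ℕ) : RowsIncreasingFrom B col := by
  intro j p u v _ hu hv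
  have hrow := isChain_getD_of_forall h j
  obtain ⟨-, rfl⟩ := List.getElem?_eq_some_iff.mp hu
  obtain ⟨hp, rfl⟩ := List.getElem?_eq_some_iff.mp hv
  exact List.isChain_iff_getElem.mp hrow p hp

theorem RowsIncreasingFrom.set {B : Tab} {t col : ℕ} (h : RowsIncreasingFrom B col)
    (htB : t < B.length) (htc : t ≤ col) (x : ℕ) :
    RowsIncreasingFrom (B.set t ((B.getD t []).set (col - t) x)) (col + 1) := by
  intro j p u v hp hu hv
  by_cases hjt : t = j
  · subst hjt
    rw [List.getD_set_self_of_lt htB] at hu hv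
    rw [List.getElem?_set_ne (by omega)] at hu hv
    exact h t p u v (by omega) hu hv
  · rw [List.getD_set_of_ne hjt] at hu hv
    exact h j p u v (by omega) hu hv

section ColumnInsertion

variable {R : List ℕ} {B : Tab} {col x : ℕ}

theorem dropWhile_colList_append_cons (s : List ℕ) (hcol : col + 1 < R.length)
    (hRx : R[col + 1] < x) :
    (colList ((R ++ s) :: B) (col + 1)).dropWhile (· < x)
      = (colList B col).dropWhile (· < x) := by
  rw [colList_append_cons s B hcol, List.dropWhile_cons_of_pos (by simpa using hRx)]

theorem takeWhile_colList_append_cons (s : List ℕ) (hcol : col + 1 < R.length)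
    (hRx : R[col + 1] < x) :
    (colList ((R ++ s) :: B) (col + 1)).takeWhile (· < x)
      = R[col + 1] :: (colList B col).takeWhile (· < x) := by
  rw [colList_append_cons s B hcol, List.takeWhile_cons_of_pos (by simpa using hRx)]

theorem InsColBelow.of_forall_lt (hB : (B.map List.length).IsChain (· > ·))
    (hcol : col + 1 < R.length) (hRx : R[col + 1] < x)
    (hdrop : (colList B col).dropWhile (· < x) = []) (hstop : HasStopRow B col x) :
    InsColBelow R B col x := by
  obtain ⟨q, hqc, hq_reach, hq_ge⟩ := hstop
  set K := (colList B col).length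
  have hq_none : (B.getD q [])[col - q]? = none := by
    cases hu : (B.getD q [])[col - q]? with
    | none => rfl
    | some u =>
      have hmem : u ∈ colList B col :=
        List.mem_of_getElem? ((getElem?_colList hB hqc.le).trans hu)
      have hlt := List.dropWhile_eq_nil_iff.mp hdrop u hmem
      have hge := hq_ge u hu
      simp only [decide_eq_true_eq] at hlt
      omega
  have hq_len : (B.getD q []).length = col - q := by
    have := List.getElem?_eq_none_iff.mp hq_none
    omega
  have hqB : q < B.length := by
    by_contra h
    rw [List.getD_eq_default _ _ (not_lt.mp h)] at hq_len
    simp at hq_len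
    omega
  have hKq : K ≤ q :=
    List.getElem?_eq_none_iff.mp ((getElem?_colList hB hqc.le).trans hq_none)
  have hK_len : (B.getD K []).length = col - K := by
    have hK_none : (B.getD K [])[col - K]? = none :=
      (getElem?_colList hB (by omega)).symm.trans (List.getElem?_eq_none le_rfl)
    have := List.getElem?_eq_none_iff.mp hK_none
    have := length_getD_add_sub_le hB hKq hqB
    omega
  refine ⟨updRow B K (B.getD K [] ++ [x]), (K + 1, col + 1), fun s => ?_⟩
  have h := InsCol.append ((R ++ s) :: B) (col + 1) x (K + 1)
    (by rw [dropWhile_colList_append_cons s hcol hRx, hdrop])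
    (by rw [colList_append_cons s B hcol]; rfl)
    (by rw [List.getD_cons_succ, hK_len]; omega) (by omega)
  rwa [List.getD_cons_succ, updRow_cons_succ] at h

theorem InsColBelow.of_equal (hcol : col + 1 < R.length) (hRx : R[col + 1] < x) {rest : List ℕ}
    (hdrop : (colList B col).dropWhile (· < x) = x :: rest)
    (hnext : InsColBelow R B (col + 1) (x + 1)) : InsColBelow R B col x := by
  obtain ⟨B', pos, hnext⟩ := hnext
  refine ⟨B', pos, fun s => InsCol.equal _ _ _ rest _ _ _ ?_ (hnext s)⟩
  rw [dropWhile_colList_append_cons s hcol hRx, hdrop]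

theorem InsColBelow.of_bump (hcol : col + 1 < R.length) (hRx : R[col + 1] < x) {e : ℕ}
    {rest : List ℕ} (hdrop : (colList B col).dropWhile (· < x) = e :: rest) (hxe : x < e)
    {t : ℕ} (ht : t = ((colList B col).takeWhile (· < x)).length)
    (hnext : InsColBelow R (B.set t ((B.getD t []).set (col - t) x)) (col + 1) e) :
    InsColBelow R B col x := by
  obtain ⟨B', pos, hnext⟩ := hnext
  refine ⟨B', pos, fun s => InsCol.bump _ _ _ e (t + 1) rest _ _ _
    (by rw [dropWhile_colList_append_cons s hcol hRx, hdrop]) hxe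
    (by rw [takeWhile_colList_append_cons s hcol hRx, ht]; rfl) ?_⟩
  rw [List.getD_cons_succ, List.set_cons_succ, Nat.add_sub_add_right]
  exact hnext s

end ColumnInsertion

theorem insColBelow {R : List ℕ} {n c : ℕ} (hR : R.length = n + 1) (hRc : ∀ u ∈ R, u < c)
    (B : Tab) (col x : ℕ) (hB : (n :: B.map List.length).IsChain (· > ·))
    (hinc : RowsIncreasingFrom B col) (hstop : HasStopRow B col x) (hcol : col < n)
    (hx : c ≤ x) : InsColBelow R B col x := by
  have hcolR : col + 1 < R.length := by omega
  have hRx : R[col + 1] < x := (hRc _ (List.getElem_mem hcolR)).trans_le hx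
  have hB' : (B.map List.length).IsChain (· > ·) := hB.tail
  cases hdrop : (colList B col).dropWhile (· < x) with
  | nil => exact .of_forall_lt hB' hcolR hRx hdrop hstop
  | cons e rest =>
    set t := ((colList B col).takeWhile (· < x)).length with ht
    have hxe : x ≤ e := by simpa using List.eq_false_of_dropWhile_eq_cons hdrop
    have hcol_t := List.getElem?_length_takeWhile_of_dropWhile_eq_cons hdrop
    have htc : t ≤ col := by
      have := (List.getElem?_eq_some_iff.mp hcol_t).1
      have := length_colList_le B col
      omega
    have hte : (B.getD t [])[col - t]? = some e := (getElem?_colList hB' htc).symm.trans hcol_t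
    have hreach : col - t < (B.getD t []).length := (List.getElem?_eq_some_iff.mp hte).1
    have htB : t < B.length := by
      by_contra h
      rw [List.getD_eq_default _ _ (not_lt.mp h)] at hreach
      simp at hreach
    have hcol' : col + 1 < n := by
      have := length_getD_add_lt hB htB
      omega
    have hnext : ∀ u, (B.getD t [])[col + 1 - t]? = some u → e < u := fun u hu =>
      hinc t (col - t) e u (by omega) hte (by rwa [show col - t + 1 = col + 1 - t by omega])
    rcases hxe.eq_or_lt with rfl | hxe
    · exact .of_equal hcolR hRx hdrop (insColBelow hR hRc B (col + 1) (x + 1) hB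
        (hinc.mono col.le_succ) ⟨t, by omega, by omega, hnext⟩ hcol' (by omega))
    · refine .of_bump hcolR hRx hdrop hxe ht (insColBelow hR hRc _ (col + 1) e ?_
        (hinc.set htB htc x) ⟨t, by omega, ?_, fun u hu => ?_⟩ hcol' (by omega))
      · rwa [map_length_set_of_length_eq List.length_set]
      · rw [List.getD_set_self_of_lt htB, List.length_set]
        omega
      · rw [List.getD_set_self_of_lt htB, List.getElem?_set_ne (by omega)] at hu
        exact (hnext u hu).le
termination_by n - col

section RowInsertion

variable {R : List ℕ} {B : Tab} {i v : ℕ}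

theorem InsRowBelow.of_forall_lt (hdrop : (B.getD i []).dropWhile (· < v) = []) :
    InsRowBelow R B i v := by
  refine ⟨updRow B i (B.getD i [] ++ [v]), (i + 1, i + 1 + (B.getD i []).length), false,
    fun s => ?_⟩
  have h := InsRow.append ((R ++ s) :: B) (i + 1) v (B.getD i []) List.getD_cons_succ.symm hdrop
  rwa [updRow_cons_succ] at h

theorem InsRowBelow.of_equal {rest : List ℕ}
    (hdrop : (B.getD i []).dropWhile (· < v) = v :: rest)
    (hnext : InsRowBelow R B (i + 1) (v + 1)) : InsRowBelow R B i v := by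
  obtain ⟨B', pos, pr, hnext⟩ := hnext
  exact ⟨B', pos, pr, fun s =>
    InsRow.equal _ _ _ rest _ _ _ (by rw [List.getD_cons_succ, hdrop]) (hnext s)⟩

theorem InsRowBelow.of_bumpRow {b : ℕ} {rest : List ℕ}
    (hpre : (B.getD i []).takeWhile (· < v) ≠ [])
    (hdrop : (B.getD i []).dropWhile (· < v) = b :: rest) (hvb : v < b)
    (hnext : InsRowBelow R (B.set i ((B.getD i []).takeWhile (· < v) ++ v :: rest)) (i + 1) b) :
    InsRowBelow R B i v := by
  obtain ⟨B', pos, pr, hnext⟩ := hnext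
  refine ⟨B', pos, pr, fun s =>
    InsRow.bumpRow _ _ _ b ((B.getD i []).takeWhile (· < v)) rest _ _ _
      (by rw [List.getD_cons_succ]) (by rw [List.getD_cons_succ, hdrop]) hvb hpre ?_⟩
  rw [List.set_cons_succ]
  exact hnext s

theorem InsRowBelow.of_bumpDiag {b : ℕ} {rest : List ℕ}
    (hpre : (B.getD i []).takeWhile (· < v) = [])
    (hdrop : (B.getD i []).dropWhile (· < v) = b :: rest) (hvb : v < b) (hpar : v % 2 = b % 2)
    (hnext : InsColBelow R (B.set i (v :: rest)) (i + 1) b) : InsRowBelow R B i v := by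
  obtain ⟨B', pos, hnext⟩ := hnext
  refine ⟨B', pos, true, fun s => InsRow.bumpDiag _ _ _ b rest _ _ _
    (by rw [List.getD_cons_succ, hpre]) (by rw [List.getD_cons_succ, hdrop]) hvb hpar ?_⟩
  rw [List.set_cons_succ]
  exact hnext s

theorem InsRowBelow.of_parity {b : ℕ} {rest : List ℕ}
    (hpre : (B.getD i []).takeWhile (· < v) = [])
    (hdrop : (B.getD i []).dropWhile (· < v) = b :: rest) (hvb : v < b) (hpar : v % 2 ≠ b % 2)
    (hnext : InsColBelow R B (i + 1) (v + 2)) : InsRowBelow R B i v := by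
  obtain ⟨B', pos, hnext⟩ := hnext
  exact ⟨B', pos, true, fun s => InsRow.parity _ _ _ b rest _ _ _
    (by rw [List.getD_cons_succ, hpre]) (by rw [List.getD_cons_succ, hdrop]) hvb hpar (hnext s)⟩

theorem insRowBelow_of_takeWhile_eq_nil {n c b : ℕ} {rest : List ℕ} (hR : R.length = n + 1)
    (hRc : ∀ u ∈ R, u < c)
    (hB : (n :: B.map List.length).IsChain (· > ·)) (hinc : ∀ r ∈ B, r.IsChain (· < ·))
    (hpre : (B.getD i []).takeWhile (· < v) = [])
    (hdrop : (B.getD i []).dropWhile (· < v) = b :: rest) (hvb : v < b) (hv : c ≤ v) :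
    InsRowBelow R B i v := by
  have hrow : B.getD i [] = b :: rest := by
    rw [← List.takeWhile_append_dropWhile (p := (· < v)) (l := B.getD i []), hpre, hdrop]
    rfl
  have hiB : i < B.length := by
    by_contra h
    rw [List.getD_eq_default _ _ (not_lt.mp h)] at hrow
    simp at hrow
  have hin : i + 1 < n := by
    have := length_getD_add_lt hB hiB
    rw [hrow, List.length_cons] at this
    omega
  have hrest : ∀ u, rest[0]? = some u → b < u := by
    intro u hu
    obtain ⟨u', rest', rfl⟩ := List.exists_cons_of_ne_nil (List.ne_nil_of_length_pos
      (List.getElem?_eq_some_iff.mp hu).1)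
    have := isChain_getD_of_forall hinc i
    rw [hrow] at this
    simpa [← (List.getElem?_eq_some_iff.mp hu).2] using (List.isChain_cons_cons.mp this).1
  by_cases hpar : v % 2 = b % 2
  · have hrow' := List.isChain_takeWhile_append_cons (isChain_getD_of_forall hinc i) hdrop hvb
    rw [hpre, List.nil_append] at hrow'
    refine .of_bumpDiag hpre hdrop hvb hpar (insColBelow hR hRc _ (i + 1) b ?_
      (rowsIncreasingFrom_of_forall_isChain (forall_isChain_set hinc hrow' i) _)
      ⟨i, by omega, ?_, fun u hu => ?_⟩ hin (by omega))
    · rwa [map_length_set_of_length_eq (by rw [hrow]; rfl)]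
    · rw [List.getD_set_self_of_lt hiB]
      simp
    · rw [List.getD_set_self_of_lt hiB, Nat.add_sub_cancel_left] at hu
      exact (hrest u hu).le
  · refine .of_parity hpre hdrop hvb hpar (insColBelow hR hRc B (i + 1) (v + 2) hB
      (rowsIncreasingFrom_of_forall_isChain hinc _) ⟨i, by omega, ?_, fun u hu => ?_⟩ hin
      (by omega))
    · rw [hrow]
      simp
    · rw [hrow, Nat.add_sub_cancel_left] at hu
      have := hrest u hu
      omega

end RowInsertion

theorem insRowBelow {R : List ℕ} {n c : ℕ} (hR : R.length = n + 1) (hRc : ∀ u ∈ R, u < c)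
    (B : Tab) (i v : ℕ) (hB : (n :: B.map List.length).IsChain (· > ·))
    (hinc : ∀ r ∈ B, r.IsChain (· < ·)) (hv : c ≤ v) : InsRowBelow R B i v := by
  cases hdrop : (B.getD i []).dropWhile (· < v) with
  | nil => exact .of_forall_lt hdrop
  | cons b rest =>
    have hbv : v ≤ b := by simpa using List.eq_false_of_dropWhile_eq_cons hdrop
    have hiB : i < B.length := by
      by_contra h
      rw [List.getD_eq_default _ _ (not_lt.mp h)] at hdrop
      simp at hdrop
    rcases hbv.eq_or_lt with rfl | hvb
    · exact .of_equal hdrop (insRowBelow hR hRc B (i + 1) (v + 1) hB hinc (by omega))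
    by_cases hpre : (B.getD i []).takeWhile (· < v) = []
    · exact insRowBelow_of_takeWhile_eq_nil hR hRc hB hinc hpre hdrop hvb hv
    have hlen :
        ((B.getD i []).takeWhile (· < v) ++ v :: rest).length = (B.getD i []).length := by
      conv_rhs => rw [← List.takeWhile_append_dropWhile (p := (· < v)) (l := B.getD i []), hdrop]
      simp
    refine .of_bumpRow hpre hdrop hvb (insRowBelow hR hRc _ (i + 1) b ?_ ?_ (by omega))
    · rwa [map_length_set_of_length_eq hlen]
    · exact forall_isChain_set hinc
        (List.isChain_takeWhile_append_cons (isChain_getD_of_forall hinc i) hdrop hvb) i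
termination_by B.length - i

theorem insRow_zero_of_forall_lt {r : List ℕ} {a : ℕ} (B : Tab) (h : ∀ y ∈ r, y < a) :
    InsRow (r :: B) 0 a ((r ++ [a]) :: B) (0, r.length) false := by
  have := InsRow.append (r :: B) 0 a r rfl
    (List.dropWhile_eq_nil_iff.mpr fun y hy => by simpa using h y hy)
  rwa [updRow_cons_zero, Nat.zero_add] at this

theorem insRow_zero_bump_last {r : List ℕ} {a b : ℕ} {B T' : Tab} {pos : ℕ × ℕ} {pr : Bool}
    (h : ∀ y ∈ r, y < a) (hab : a < b) (hr : r ≠ [])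
    (hnext : InsRow ((r ++ [a]) :: B) 1 b T' pos pr) : InsRow ((r ++ [b]) :: B) 0 a T' pos pr := by
  have hlt : ∀ y ∈ r, decide (y < a) = true := fun y hy => by simpa using h y hy
  refine InsRow.bumpRow _ 0 a b r [] _ _ _ ?_ ?_ hab hr hnext
  · rw [List.getD_cons_zero, List.takeWhile_append_of_pos hlt]
    simp [hab.le]
  · rw [List.getD_cons_zero, List.dropWhile_append_of_pos hlt]
    simp [hab.le]

/-- If every entry of the first row of the increasing shifted tableau `T` is smaller
than `a`, and `a < b < c` with `row(T)·acb` an FPF-involution word, then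
`T ← acb = T ← cab`; both append `a` and `b` to the end of the first row (the letter
`c` being inserted into the second row). -/
theorem first_row_small_acb_eq_cab (T : Tab) (a b c : ℕ)
    (hne : T ≠ []) (hT : IsIncreasingTab T)
    (hsmall : ∀ y ∈ T.getD 0 [], y < a) (hab : a < b) (hbc : b < c)
    (h : IsFPFWord (rowWord T ++ [a, c, b])) :
    ∃ U : Tab, InsWord T [a, c, b] U ∧ InsWord T [c, a, b] U ∧
      U.getD 0 [] = T.getD 0 [] ++ [a, b] := by
  obtain ⟨r, B, rfl⟩ := List.exists_cons_of_ne_nil hne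
  obtain ⟨hrows, hshape, hinc, -, -⟩ := hT
  rw [List.getD_cons_zero] at hsmall ⊢
  have hra_b : ∀ y ∈ r ++ [a], y < b := by
    simp only [List.mem_append, List.mem_singleton]
    rintro y (hy | rfl)
    exacts [(hsmall y hy).trans hab, hab]
  have hra_c : ∀ y ∈ r ++ [a], y < c := fun y hy => (hra_b y hy).trans hbc
  obtain ⟨B', pos, pr, hins⟩ :=
    insRowBelow (R := r ++ [a]) (n := r.length) (by simp) hra_c B 0 c
      ((List.isChain_map (R := (· > ·)) List.length).mpr hshape)
      (fun x hx => hinc x (List.mem_cons_of_mem r hx)) le_rfl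
  refine ⟨(r ++ [a] ++ [b]) :: B', ?_, ?_, by simp⟩
  · exact .cons _ _ _ _ _ _ _ (insRow_zero_of_forall_lt B hsmall) <|
      .cons _ _ _ _ _ _ _ (insRow_zero_of_forall_lt B hra_c) <|
      .cons _ _ _ _ _ _ _ (insRow_zero_bump_last hra_b hbc (by simp) (hins [b])) (.nil _)
  · exact .cons _ _ _ _ _ _ _ (insRow_zero_of_forall_lt B fun y hy => hra_c y (by simp [hy])) <|
      .cons _ _ _ _ _ _ _ (insRow_zero_bump_last hsmall (hab.trans hbc) (hrows r (by simp))
        (by simpa using hins [])) <|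
      .cons _ _ _ _ _ _ _ (insRow_zero_of_forall_lt B' hra_b) (.nil _)
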